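/- arXiv:0909.0438 — 4 statements merged into one kernel-verified Lean document; each statement's English description precedes it below -/
import Mathlib

section
/- For every integer n ≥ 1, exactly half of all persymmetric n×n matrices over F₂ are invertible; that is, the number Γ_n^{n×n} of persymmetric n×n matrices over F₂ of rank n equals 2^{2n−2}, while the total number of persymmetric n×n matrices over F₂ is 2^{2n−1}. -/
/-- A matrix over `ZMod 2` is persymmetric if its entries are constant along
anti-diagonals. -/
def IsPersymmetric {s k : ℕ} (M : Matrix (Fin s) (Fin k) (ZMod 2)) : Prop :=
  ∀ (a a' : Fin s) (b b' : Fin k), (a : ℕ) + (b : ℕ) = (a' : ℕ) + (b' : ℕ) → M a b = M a' b'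

/-- `persymRankCount s k i` is the number of persymmetric `s × k` matrices over `F₂`
of rank `i`. -/
noncomputable def persymRankCount (s k i : ℕ) : ℕ :=
  Nat.card {M : Matrix (Fin s) (Fin k) (ZMod 2) // IsPersymmetric M ∧ M.rank = i}

/-- `persymTotal s k` is the total number of persymmetric `s × k` matrices over `F₂`. -/
noncomputable def persymTotal (s k : ℕ) : ℕ :=
  Nat.card {M : Matrix (Fin s) (Fin k) (ZMod 2) // IsPersymmetric M}

/-!
Identify a persymmetric `n × n` matrix with its Hankel sequence `a₀, …, a_{2n-2}` and let `X`
act on sequences as the left shift. A vector `c` lies in the kernel of the matrix iff the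
polynomial `∑ cⱼ Xʲ` (of degree `< n`) annihilates the first `n` windows of `a`, so the matrix is
singular iff `a` has such a windowed annihilator; let `f` be the monic one of least degree `d`.

Over a finite field `𝔽_q`, singular sequences correspond bijectively to pairs `(g, β)` with `g`
monic of degree `n - 1` and `β ∈ 𝔽_q^{n-1}`: send `a` to `β = (a₀, …, a_{n-2})` and `g = f t`,
where `t` is the monic polynomial of degree `n - 1 - d` whose lower coefficients are
`a_{n+d}, …, a_{2n-2}`. Conversely, extend `β` to the sequence `c` satisfying the recurrence of
`g`; then `f` is the minimal polynomial of `c`, `t = g / f`, and `a` is `c₀, …, c_{n+d-1}`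
followed by the coefficients of `t`. The point is that a monic annihilator of `c` of degree `≤ n`
forces every polynomial that kills the first `n` windows of `c` to kill all of `c`, so minimal
window annihilators and minimal polynomials agree. Hence `q^{2n-2}` of the `q^{2n-1}` Hankel
matrices are singular.
-/

open Polynomial Finset Matrix

section Recurrence

variable {R : Type*} [CommRing R]

variable (R) in
def seqShift : Module.End R (ℕ → R) := LinearMap.funLeft R R Nat.succ

lemma seqShift_pow_apply (i : ℕ) (u : ℕ → R) (k : ℕ) : (seqShift R ^ i) u k = u (k + i) := by
  induction i generalizing u with
  | zero => rfl
  | succ i ih => rw [pow_succ, Module.End.mul_apply, ih]; rfl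

lemma aeval_seqShift_apply {p : R[X]} {m : ℕ} (hp : p.natDegree < m) (u : ℕ → R) (k : ℕ) :
    aeval (seqShift R) p u k = ∑ j ∈ range m, p.coeff j * u (k + j) := by
  simp [aeval_eq_sum_range' hp, seqShift_pow_apply]

lemma aeval_seqShift_apply_of_monic {f : R[X]} (hf : f.Monic) (u : ℕ → R) (k : ℕ) :
    aeval (seqShift R) f u k
      = ∑ j ∈ range f.natDegree, f.coeff j * u (k + j) + u (k + f.natDegree) := by
  rw [aeval_seqShift_apply (Nat.lt_succ_self _), sum_range_succ, hf.coeff_natDegree, one_mul]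

lemma aeval_seqShift_apply_congr {p : R[X]} {u v : ℕ → R} {k : ℕ}
    (h : ∀ j ≤ p.natDegree, u (k + j) = v (k + j)) :
    aeval (seqShift R) p u k = aeval (seqShift R) p v k := by
  simp only [aeval_seqShift_apply (Nat.lt_succ_self _)]
  exact sum_congr rfl fun j hj => by rw [h j (Nat.lt_succ_iff.1 (mem_range.1 hj))]

lemma eq_of_aeval_seqShift_apply_eq_zero {f : R[X]} (hf : f.Monic) {u v : ℕ → R} {m : ℕ}
    (hu : ∀ i < m, aeval (seqShift R) f u i = 0) (hv : ∀ i < m, aeval (seqShift R) f v i = 0)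
    (h : ∀ k < f.natDegree, u k = v k) : ∀ k < m + f.natDegree, u k = v k := by
  intro k
  induction k using Nat.strong_induction_on with
  | _ k ih =>
    intro hk
    by_cases hkd : k < f.natDegree
    · exact h k hkd
    obtain ⟨i, rfl⟩ : ∃ i, k = i + f.natDegree := ⟨k - f.natDegree, by omega⟩
    have hsum : ∑ j ∈ range f.natDegree, f.coeff j * u (i + j)
        = ∑ j ∈ range f.natDegree, f.coeff j * v (i + j) :=
      sum_congr rfl fun j hj => by
        rw [mem_range] at hj
        rw [ih _ (by omega) (by omega)]
    have hui := hu i (by omega)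
    have hvi := hv i (by omega)
    rw [aeval_seqShift_apply_of_monic hf] at hui hvi
    linear_combination hui - hvi - hsum

lemma eq_of_aeval_seqShift_eq_zero {f : R[X]} (hf : f.Monic) {u v : ℕ → R}
    (hu : aeval (seqShift R) f u = 0) (hv : aeval (seqShift R) f v = 0)
    (h : ∀ k < f.natDegree, u k = v k) : u = v :=
  funext fun k => eq_of_aeval_seqShift_apply_eq_zero hf (m := k + 1)
    (fun i _ => by rw [hu]; rfl) (fun i _ => by rw [hv]; rfl) h k (by omega)

def toLinearRecurrence (f : R[X]) : LinearRecurrence R := ⟨f.natDegree, fun i => -f.coeff i⟩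

def recurrenceSolution (f : R[X]) (u : ℕ → R) : ℕ → R :=
  (toLinearRecurrence f).mkSol fun i => u i

lemma aeval_seqShift_recurrenceSolution {f : R[X]} (hf : f.Monic) (u : ℕ → R) :
    aeval (seqShift R) f (recurrenceSolution f u) = 0 := by
  funext k
  have hrec : recurrenceSolution f u (k + f.natDegree)
      = ∑ i : Fin f.natDegree, -f.coeff i * recurrenceSolution f u (k + i) :=
    (toLinearRecurrence f).is_sol_mkSol _ k
  rw [Pi.zero_apply, aeval_seqShift_apply_of_monic hf, hrec,
    ← Fin.sum_univ_eq_sum_range (fun j => f.coeff j * recurrenceSolution f u (k + j))]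
  simp

lemma recurrenceSolution_of_lt {f : R[X]} (u : ℕ → R) {k : ℕ} (hk : k < f.natDegree) :
    recurrenceSolution f u k = u k :=
  (toLinearRecurrence f).mkSol_eq_init _ ⟨k, hk⟩

end Recurrence

section MinMonic

variable {K : Type*} [Field K] {S T : Submodule K K[X]} {f g p : K[X]}

structure IsMinMonic (S : Submodule K K[X]) (f : K[X]) : Prop where
  mem : f ∈ S
  monic : f.Monic
  natDegree_le : ∀ p ∈ S, p ≠ 0 → f.natDegree ≤ p.natDegree

lemma IsMinMonic.unique (hf : IsMinMonic S f) (hg : IsMinMonic S g) : f = g := by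
  by_contra hne
  have hdeg : f.natDegree = g.natDegree :=
    le_antisymm (hf.natDegree_le g hg.mem hg.monic.ne_zero)
      (hg.natDegree_le f hf.mem hf.monic.ne_zero)
  have hsub : f - g ≠ 0 := sub_ne_zero.2 hne
  have hlt : (f - g).natDegree < f.natDegree :=
    natDegree_lt_natDegree hsub <| degree_sub_lt_left
      (by rw [degree_eq_natDegree hf.monic.ne_zero, degree_eq_natDegree hg.monic.ne_zero, hdeg])
      hf.monic.ne_zero (by rw [hf.monic.leadingCoeff, hg.monic.leadingCoeff])
  exact absurd (hf.natDegree_le _ (S.sub_mem hf.mem hg.mem) hsub) (not_le.2 hlt)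

lemma exists_isMinMonic (hp : p ∈ S) (hp0 : p ≠ 0) : ∃ f, IsMinMonic S f := by
  classical
  have hex : ∃ d, ∃ q ∈ S, q ≠ 0 ∧ q.natDegree = d := ⟨_, p, hp, hp0, rfl⟩
  obtain ⟨q, hqS, hq0, hqd⟩ := Nat.find_spec hex
  have hlc : q.leadingCoeff ≠ 0 := leadingCoeff_ne_zero.2 hq0
  refine ⟨C q.leadingCoeff⁻¹ * q, ⟨?_, ?_, fun r hr hr0 => ?_⟩⟩
  · rw [← smul_eq_C_mul]
    exact S.smul_mem _ hqS
  · exact monic_C_mul_of_mul_leadingCoeff_eq_one (inv_mul_cancel₀ hlc)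
  · rw [natDegree_C_mul (inv_ne_zero hlc), hqd]
    exact Nat.find_min' hex ⟨r, hr, hr0, rfl⟩

lemma exists_isMinMonic_natDegree_lt_iff {n : ℕ} :
    (∃ f, IsMinMonic S f ∧ f.natDegree < n) ↔ ∃ p ∈ S, p ≠ 0 ∧ p.natDegree < n := by
  constructor
  · rintro ⟨f, hf, hfn⟩
    exact ⟨f, hf.mem, hf.monic.ne_zero, hfn⟩
  · rintro ⟨p, hp, hp0, hpn⟩
    obtain ⟨f, hf⟩ := exists_isMinMonic hp hp0
    exact ⟨f, hf, (hf.natDegree_le p hp hp0).trans_lt hpn⟩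

lemma IsMinMonic.congr (hf : IsMinMonic S f) (hfT : f ∈ T)
    (hTS : ∀ p ∈ T, p.natDegree < f.natDegree → p ∈ S) : IsMinMonic T f :=
  ⟨hfT, hf.monic, fun p hp hp0 =>
    not_lt.1 fun hlt => absurd (hf.natDegree_le p (hTS p hp hlt) hp0) (not_le.2 hlt)⟩

open Classical in
noncomputable def minMonic (S : Submodule K K[X]) : K[X] :=
  if h : ∃ f, IsMinMonic S f then h.choose else 0

lemma IsMinMonic.minMonic_eq (hf : IsMinMonic S f) : minMonic S = f := by
  rw [minMonic, dif_pos ⟨f, hf⟩]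
  exact (Exists.choose_spec (p := IsMinMonic S) ⟨f, hf⟩).unique hf

lemma isMinMonic_minMonic (hp : p ∈ S) (hp0 : p ≠ 0) : IsMinMonic S (minMonic S) := by
  obtain ⟨f, hf⟩ := exists_isMinMonic hp hp0
  rwa [hf.minMonic_eq]

end MinMonic

section Annihilator

variable {K : Type*} [Field K] {f g p : K[X]} {n : ℕ} {u v : ℕ → K}

def seqAnnihilator (u : ℕ → K) : Submodule K K[X] where
  carrier := {p | aeval (seqShift K) p u = 0}
  add_mem' hp hq := by simp_all
  zero_mem' := by simp
  smul_mem' c p hp := by simp_all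

def windowAnnihilator (n : ℕ) (u : ℕ → K) : Submodule K K[X] where
  carrier := {p | ∀ i < n, aeval (seqShift K) p u i = 0}
  add_mem' hp hq i hi := by simp_all
  zero_mem' := by simp
  smul_mem' c p hp i hi := by simp_all

lemma mem_seqAnnihilator : p ∈ seqAnnihilator u ↔ aeval (seqShift K) p u = 0 := Iff.rfl

lemma mem_windowAnnihilator :
    p ∈ windowAnnihilator n u ↔ ∀ i < n, aeval (seqShift K) p u i = 0 := Iff.rfl

lemma mul_mem_seqAnnihilator (q : K[X]) (hp : p ∈ seqAnnihilator u) :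
    q * p ∈ seqAnnihilator u := by
  rw [mem_seqAnnihilator] at hp ⊢
  rw [map_mul, Module.End.mul_apply, hp, map_zero]

lemma IsMinMonic.dvd (hf : IsMinMonic (seqAnnihilator u) f) (hg : g ∈ seqAnnihilator u) :
    f ∣ g := by
  have hr : g %ₘ f ∈ seqAnnihilator u := by
    rw [modByMonic_eq_sub_mul_div, mul_comm]
    exact Submodule.sub_mem _ hg (mul_mem_seqAnnihilator _ hf.mem)
  by_contra hndvd
  have hr0 : g %ₘ f ≠ 0 := fun h => hndvd ((modByMonic_eq_zero_iff_dvd hf.monic).1 h)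
  exact absurd (hf.natDegree_le _ hr hr0)
    (not_le.2 (natDegree_lt_natDegree hr0 (degree_modByMonic_lt g hf.monic)))

lemma seqAnnihilator_le_windowAnnihilator : seqAnnihilator u ≤ windowAnnihilator n u :=
  fun p hp i _ => by rw [mem_seqAnnihilator.1 hp]; rfl

lemma windowAnnihilator_le_seqAnnihilator (hf : f.Monic) (hfu : f ∈ seqAnnihilator u)
    (hfn : f.natDegree ≤ n) : windowAnnihilator n u ≤ seqAnnihilator u := by
  intro p hp
  have hcomm : aeval (seqShift K) f (aeval (seqShift K) p u) = 0 := by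
    rw [← Module.End.mul_apply, ← map_mul, mul_comm, map_mul, Module.End.mul_apply,
      mem_seqAnnihilator.1 hfu, map_zero]
  exact eq_of_aeval_seqShift_eq_zero hf hcomm (map_zero _) fun k hk => hp k (by omega)

lemma mem_windowAnnihilator_congr (h : ∀ k < n + p.natDegree, u k = v k) :
    p ∈ windowAnnihilator n u ↔ p ∈ windowAnnihilator n v := by
  simp only [mem_windowAnnihilator]
  refine forall₂_congr fun i hi => ?_
  rw [aeval_seqShift_apply_congr fun j hj => h (i + j) (by omega)]

lemma isMinMonic_seqAnnihilator_iff {a c : ℕ → K} (hfc : f ∈ seqAnnihilator c)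
    (hfn : f.natDegree ≤ n) (h : ∀ k < n + f.natDegree, a k = c k) :
    IsMinMonic (seqAnnihilator c) f ↔ IsMinMonic (windowAnnihilator n a) f := by
  have hwin : ∀ p, p.natDegree ≤ f.natDegree →
      (p ∈ windowAnnihilator n a ↔ p ∈ windowAnnihilator n c) :=
    fun p hp => mem_windowAnnihilator_congr fun k hk => h k (by omega)
  constructor
  · intro hf
    refine hf.congr ((hwin f le_rfl).2 (seqAnnihilator_le_windowAnnihilator hfc))
      fun p hp hpf => ?_
    exact windowAnnihilator_le_seqAnnihilator hf.monic hfc hfn ((hwin p hpf.le).1 hp)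
  · intro hf
    exact hf.congr hfc fun p hp hpf => (hwin p hpf.le).2 (seqAnnihilator_le_windowAnnihilator hp)

end Annihilator

def Matrix.hankel {α : Type*} (n : ℕ) (u : ℕ → α) : Matrix (Fin n) (Fin n) α :=
  of fun i j => u (i + j)

@[simp]
lemma Matrix.hankel_apply {α : Type*} (n : ℕ) (u : ℕ → α) (i j : Fin n) :
    hankel n u i j = u (i + j) :=
  rfl

def padSeq {α : Type*} [Zero α] {N : ℕ} (a : Fin N → α) : ℕ → α :=
  fun k => if h : k < N then a ⟨k, h⟩ else 0

lemma padSeq_of_lt {α : Type*} [Zero α] {N : ℕ} (a : Fin N → α) {k : ℕ} (hk : k < N) :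
    padSeq a k = a ⟨k, hk⟩ :=
  dif_pos hk

section HankelMatrix

variable {K : Type*} [Field K] {n : ℕ}

lemma Matrix.hankel_mulVec_degreeLTEquiv (u : ℕ → K) (q : degreeLT K n) :
    hankel n u *ᵥ degreeLTEquiv K n q = fun i : Fin n => aeval (seqShift K) q.1 u i := by
  obtain ⟨p, hp⟩ := q
  rcases eq_or_ne p 0 with rfl | hp0
  · rw [show (⟨0, hp⟩ : degreeLT K n) = 0 from rfl]
    ext i
    simp
  ext i
  rw [aeval_seqShift_apply ((natDegree_lt_iff_degree_lt hp0).2 (mem_degreeLT.1 hp)),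
    ← Fin.sum_univ_eq_sum_range (fun j => p.coeff j * u (i + j))]
  simp [degreeLTEquiv, mulVec, dotProduct, mul_comm]

lemma Matrix.det_hankel_eq_zero_iff (u : ℕ → K) :
    (hankel n u).det = 0 ↔ ∃ f, IsMinMonic (windowAnnihilator n u) f ∧ f.natDegree < n := by
  rw [← exists_mulVec_eq_zero_iff, exists_isMinMonic_natDegree_lt_iff,
    (degreeLTEquiv K n).surjective.exists]
  simp only [ne_eq, LinearEquiv.map_eq_zero_iff, hankel_mulVec_degreeLTEquiv, funext_iff,
    Pi.zero_apply, Fin.forall_iff, Subtype.exists, Submodule.mk_eq_zero, mem_degreeLT,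
    mem_windowAnnihilator]
  exact exists_congr fun p =>
    ⟨fun ⟨hp, hp0, hw⟩ => ⟨hw, hp0, (natDegree_lt_iff_degree_lt hp0).2 hp⟩,
      fun ⟨hw, hp0, hpn⟩ => ⟨(natDegree_lt_iff_degree_lt hp0).1 hpn, hp0, hw⟩⟩

lemma Matrix.rank_eq_card_iff_det_ne_zero {m : Type*} [Fintype m] [DecidableEq m]
    {M : Matrix m m K} : M.rank = Fintype.card m ↔ M.det ≠ 0 := by
  refine ⟨fun hr hdet => ?_, rank_of_det_ne_zero⟩
  obtain ⟨v, hv0, hv⟩ := exists_mulVec_eq_zero_iff.2 hdet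
  have hker : Module.finrank K (LinearMap.ker M.mulVecLin) = 0 := by
    have := LinearMap.finrank_range_add_finrank_ker M.mulVecLin
    rw [← rank, hr, Module.finrank_fintype_fun_eq_card] at this
    omega
  exact hv0 ((Submodule.finrank_eq_zero.1 hker).le hv)

end HankelMatrix

section Count

variable {K : Type*} [Field K] {n : ℕ}

noncomputable def monicEquiv (e : ℕ) :
    {p : K[X] // p.Monic ∧ p.natDegree = e} ≃ (Fin e → K) :=
  (monicEquivDegreeLT e).trans (degreeLTEquiv K e).toEquiv

lemma monicEquiv_apply {e : ℕ} (p : {p : K[X] // p.Monic ∧ p.natDegree = e}) (i : Fin e) :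
    monicEquiv e p i = p.1.coeff i := by
  simp only [monicEquiv, monicEquivDegreeLT, degreeLTEquiv, Equiv.trans_apply, Equiv.coe_fn_mk,
    LinearEquiv.coe_toEquiv, LinearEquiv.coe_mk, LinearMap.coe_mk, AddHom.coe_mk]
  exact eraseLead_coeff_of_ne _ (by rw [p.2.2]; exact i.2.ne)

lemma card_monic_natDegree_eq [Fintype K] (e : ℕ) :
    Nat.card {p : K[X] // p.Monic ∧ p.natDegree = e} = Fintype.card K ^ e := by
  rw [Nat.card_congr (monicEquiv e), Nat.card_fun, Nat.card_fin, Nat.card_eq_fintype_card]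

noncomputable def tailFactor (n : ℕ) (u : ℕ → K) : K[X] :=
  ((monicEquiv (n - 1 - (minMonic (windowAnnihilator n u)).natDegree)).symm
    fun i => u (n + (minMonic (windowAnnihilator n u)).natDegree + i)).1

lemma tailFactor_monic (n : ℕ) (u : ℕ → K) : (tailFactor n u).Monic :=
  ((monicEquiv _).symm _).2.1

lemma natDegree_tailFactor (n : ℕ) (u : ℕ → K) :
    (tailFactor n u).natDegree = n - 1 - (minMonic (windowAnnihilator n u)).natDegree :=
  ((monicEquiv _).symm _).2.2

lemma coeff_tailFactor (u : ℕ → K) {i : ℕ}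
    (hi : i < n - 1 - (minMonic (windowAnnihilator n u)).natDegree) :
    (tailFactor n u).coeff i = u (n + (minMonic (windowAnnihilator n u)).natDegree + i) := by
  rw [tailFactor, ← monicEquiv_apply _ ⟨i, hi⟩, Equiv.apply_symm_apply]

noncomputable def hankelCode (n : ℕ) (u : ℕ → K) : K[X] :=
  minMonic (windowAnnihilator n u) * tailFactor n u

noncomputable def hankelDecode (n : ℕ) (g : K[X]) (β : ℕ → K) : ℕ → K :=
  let f := minMonic (seqAnnihilator (recurrenceSolution g β))
  fun k => if k < n + f.natDegree then recurrenceSolution g β k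
    else (g /ₘ f).coeff (k - (n + f.natDegree))

lemma isMinMonic_of_det_hankel_eq_zero {u : ℕ → K} (h : (hankel n u).det = 0) :
    IsMinMonic (windowAnnihilator n u) (minMonic (windowAnnihilator n u)) ∧
      (minMonic (windowAnnihilator n u)).natDegree < n := by
  obtain ⟨f, hf, hfn⟩ := (det_hankel_eq_zero_iff u).1 h
  rw [hf.minMonic_eq]
  exact ⟨hf, hfn⟩

lemma hankelCode_monic_natDegree {u : ℕ → K} (h : (hankel n u).det = 0) :
    (hankelCode n u).Monic ∧ (hankelCode n u).natDegree = n - 1 := by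
  obtain ⟨hf, hfn⟩ := isMinMonic_of_det_hankel_eq_zero h
  refine ⟨hf.monic.mul (tailFactor_monic n u), ?_⟩
  rw [hankelCode, hf.monic.natDegree_mul (tailFactor_monic n u), natDegree_tailFactor]
  omega

lemma hankelDecode_hankelCode {u β : ℕ → K} (h : (hankel n u).det = 0)
    (hβ : ∀ k < n - 1, β k = u k) :
    ∀ k < 2 * n - 1, hankelDecode n (hankelCode n u) β k = u k := by
  obtain ⟨hf, hfn⟩ := isMinMonic_of_det_hankel_eq_zero h
  set f := minMonic (windowAnnihilator n u)
  set b := recurrenceSolution f u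
  have hb : f ∈ seqAnnihilator b := aeval_seqShift_recurrenceSolution hf.monic u
  have hbu : ∀ k < n + f.natDegree, b k = u k :=
    eq_of_aeval_seqShift_apply_eq_zero hf.monic
      (fun i _ => by rw [mem_seqAnnihilator.1 hb]; rfl) hf.mem
      fun k hk => recurrenceSolution_of_lt u hk
  have hgb : hankelCode n u ∈ seqAnnihilator b := by
    rw [hankelCode, mul_comm]
    exact mul_mem_seqAnnihilator _ hb
  obtain ⟨hg, hgn⟩ := hankelCode_monic_natDegree h
  have hcb : recurrenceSolution (hankelCode n u) β = b :=
    eq_of_aeval_seqShift_eq_zero hg (aeval_seqShift_recurrenceSolution hg β) hgb fun k hk => by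
      rw [recurrenceSolution_of_lt β hk, hβ k (by omega), hbu k (by omega)]
  have hmin : IsMinMonic (seqAnnihilator b) f :=
    (isMinMonic_seqAnnihilator_iff hb hfn.le fun k hk => (hbu k hk).symm).2 hf
  intro k hk
  simp only [hankelDecode]
  rw [hcb, hmin.minMonic_eq, hankelCode, mul_divByMonic_cancel_left _ hf.monic]
  split_ifs with hkf
  · exact hbu k hkf
  · have hi : k - (n + f.natDegree) < n - 1 - f.natDegree := by omega
    rw [coeff_tailFactor u hi]
    show u (n + f.natDegree + _) = u k
    congr 1
    omega

lemma hankelDecode_of_lt {g : K[X]} (hgn : g.natDegree = n - 1) (β : ℕ → K) {k : ℕ}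
    (hk : k < n - 1) : hankelDecode n g β k = β k := by
  simp only [hankelDecode]
  rw [if_pos (by omega), recurrenceSolution_of_lt β (by omega)]

lemma hankelCode_of_eqOn_hankelDecode (hn : 1 ≤ n) {g : K[X]} (hg : g.Monic)
    (hgn : g.natDegree = n - 1) {β u : ℕ → K}
    (hu : ∀ k < 2 * n - 1, u k = hankelDecode n g β k) :
    (hankel n u).det = 0 ∧ hankelCode n u = g := by
  have hgc : g ∈ seqAnnihilator (recurrenceSolution g β) :=
    aeval_seqShift_recurrenceSolution hg β
  set f := minMonic (seqAnnihilator (recurrenceSolution g β))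
  have hf : IsMinMonic (seqAnnihilator (recurrenceSolution g β)) f :=
    isMinMonic_minMonic hgc hg.ne_zero
  have hfn : f.natDegree ≤ n - 1 := hgn ▸ hf.natDegree_le g hgc hg.ne_zero
  have hgf : f * (g /ₘ f) = g := by
    have := modByMonic_add_div g f
    rwa [(modByMonic_eq_zero_iff_dvd hf.monic).2 (hf.dvd hgc), zero_add] at this
  have hq : (g /ₘ f).Monic ∧ (g /ₘ f).natDegree = n - 1 - f.natDegree :=
    ⟨hf.monic.of_mul_monic_left (by rw [hgf]; exact hg),
      by rw [natDegree_divByMonic _ hf.monic, hgn]⟩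
  have huc : ∀ k < n + f.natDegree, u k = recurrenceSolution g β k := fun k hk => by
    rw [hu k (by omega)]
    exact if_pos hk
  have hwin : IsMinMonic (windowAnnihilator n u) f :=
    (isMinMonic_seqAnnihilator_iff hf.mem (by omega) huc).1 hf
  refine ⟨(det_hankel_eq_zero_iff u).2 ⟨f, hwin, by omega⟩, ?_⟩
  have htail : tailFactor n u = g /ₘ f := by
    rw [tailFactor, hwin.minMonic_eq]
    refine congrArg Subtype.val ((monicEquiv _).symm_apply_eq (y := ⟨g /ₘ f, hq⟩) |>.2 ?_)
    funext i
    rw [monicEquiv_apply, hu _ (by omega)]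
    show (if n + f.natDegree + i < n + f.natDegree then recurrenceSolution g β _
      else (g /ₘ f).coeff (n + f.natDegree + i - (n + f.natDegree))) = _
    rw [if_neg (by omega), Nat.add_sub_cancel_left]
  rw [hankelCode, hwin.minMonic_eq, htail, hgf]

noncomputable def singularHankelEquiv (hn : 1 ≤ n) :
    {a : Fin (2 * n - 1) → K // (hankel n (padSeq a)).det = 0} ≃
      {g : K[X] // g.Monic ∧ g.natDegree = n - 1} × (Fin (n - 1) → K) where
  toFun a := (⟨hankelCode n (padSeq a.1), hankelCode_monic_natDegree a.2⟩,
    fun i => a.1 (Fin.castLE (by omega) i))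
  invFun gβ := ⟨fun k => hankelDecode n gβ.1.1 (padSeq gβ.2) k,
    (hankelCode_of_eqOn_hankelDecode hn gβ.1.2.1 gβ.1.2.2 fun k hk => padSeq_of_lt _ hk).1⟩
  left_inv a := Subtype.ext <| funext fun k => by
    have hβ : ∀ k < n - 1, padSeq (fun i : Fin (n - 1) => a.1 (Fin.castLE (by omega) i)) k
        = padSeq a.1 k := fun k hk => by
      rw [padSeq_of_lt _ hk, padSeq_of_lt _ (by omega)]
      rfl
    exact (hankelDecode_hankelCode a.2 hβ k k.2).trans (padSeq_of_lt _ k.2)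
  right_inv gβ := by
    obtain ⟨⟨g, hg, hgn⟩, β⟩ := gβ
    refine Prod.ext (Subtype.ext ?_) (funext fun i => ?_)
    · exact (hankelCode_of_eqOn_hankelDecode hn hg hgn fun k hk => padSeq_of_lt _ hk).2
    · exact (hankelDecode_of_lt hgn _ i.2).trans (padSeq_of_lt _ i.2)

theorem card_det_hankel_eq_zero [Fintype K] (hn : 1 ≤ n) :
    Nat.card {a : Fin (2 * n - 1) → K // (hankel n (padSeq a)).det = 0}
      = Fintype.card K ^ (2 * n - 2) := by
  rw [Nat.card_congr (singularHankelEquiv hn), Nat.card_prod, card_monic_natDegree_eq,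
    Nat.card_fun, Nat.card_fin, Nat.card_eq_fintype_card, ← pow_add]
  congr 1
  omega

theorem card_det_hankel_ne_zero [Fintype K] (hn : 1 ≤ n) :
    Nat.card {a : Fin (2 * n - 1) → K // (hankel n (padSeq a)).det ≠ 0}
      = Fintype.card K ^ (2 * n - 1) - Fintype.card K ^ (2 * n - 2) := by
  classical
  have hsum := Nat.card_congr (Equiv.sumCompl fun a : Fin (2 * n - 1) → K =>
    (hankel n (padSeq a)).det = 0)
  rw [Nat.card_sum, card_det_hankel_eq_zero hn, Nat.card_fun, Nat.card_fin,
    Nat.card_eq_fintype_card (α := K)] at hsum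
  change _ + Nat.card {a : Fin (2 * n - 1) → K // (hankel n (padSeq a)).det ≠ 0} = _ at hsum
  omega

end Count

lemma isPersymmetric_hankel {n : ℕ} (u : ℕ → ZMod 2) : IsPersymmetric (hankel n u) :=
  fun a a' b b' h => by simp only [hankel_apply, h]

def persymmetricEquiv (n : ℕ) :
    {M : Matrix (Fin n) (Fin n) (ZMod 2) // IsPersymmetric M} ≃ (Fin (2 * n - 1) → ZMod 2) where
  toFun M k := M.1 ⟨min (k : ℕ) (n - 1), by omega⟩ ⟨k - min (k : ℕ) (n - 1), by omega⟩
  invFun a := ⟨hankel n (padSeq a), isPersymmetric_hankel _⟩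
  left_inv M := Subtype.ext <| Matrix.ext fun i j => by
    dsimp only
    rw [hankel_apply, padSeq_of_lt _ (by omega)]
    exact M.2 _ _ _ _ (by simp only; omega)
  right_inv a := funext fun k => by
    dsimp only
    rw [hankel_apply, padSeq_of_lt _ (by simp only; omega)]
    congr 2
    simp only
    omega

lemma hankel_persymmetricEquiv {n : ℕ}
    (M : {M : Matrix (Fin n) (Fin n) (ZMod 2) // IsPersymmetric M}) :
    hankel n (padSeq (persymmetricEquiv n M)) = M.1 :=
  congrArg Subtype.val ((persymmetricEquiv n).symm_apply_apply M)

theorem persym_invertible_fraction (n : ℕ) (hn : 1 ≤ n) :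
    persymRankCount n n n = 2 ^ (2 * n - 2) ∧ persymTotal n n = 2 ^ (2 * n - 1) := by
  have hrank : persymRankCount n n n
      = Nat.card {a : Fin (2 * n - 1) → ZMod 2 // (hankel n (padSeq a)).det ≠ 0} :=
    Nat.card_congr <| (Equiv.subtypeSubtypeEquivSubtypeInter _ _).symm.trans <|
      (persymmetricEquiv n).subtypeEquiv fun M => by
        rw [← rank_eq_card_iff_det_ne_zero, Fintype.card_fin, hankel_persymmetricEquiv]
  refine ⟨?_, ?_⟩
  · rw [hrank, card_det_hankel_ne_zero hn, ZMod.card]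
    obtain ⟨m, rfl⟩ : ∃ m, n = m + 1 := ⟨n - 1, by omega⟩
    rw [show 2 * (m + 1) - 1 = 2 * m + 1 by omega, show 2 * (m + 1) - 2 = 2 * m by omega,
      pow_succ]
    omega
  · rw [persymTotal, Nat.card_congr (persymmetricEquiv n), Nat.card_fun, Nat.card_fin,
      Nat.card_zmod]
end

section
/- The number Γ_i^{[2;2]×k} of double persymmetric matrices of type [2;2]×k over F₂ of rank i equals: 1 for i = 0 and k ≥ 1; 9 for i = 1 and k > 1; 3·2^{k+1} + 30 for i = 2 and k > 2; 21·2^{k+1} − 168 for i = 3 and k > 3; and 2^{2k+2} − 3·2^{k+4} + 128 for i = 4 and k ≥ 4. -/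
/-- A `(s+t) × k` matrix over `F₂` is double persymmetric of type `[s; t] × k` if its
top `s × k` block and its bottom `t × k` block are each constant along anti-diagonals. -/
def IsDoublePersymmetric (s t k : ℕ) (M : Matrix (Fin (s + t)) (Fin k) (ZMod 2)) : Prop :=
  (∀ (a a' : Fin (s + t)) (b b' : Fin k), (a : ℕ) < s → (a' : ℕ) < s →
    (a : ℕ) + (b : ℕ) = (a' : ℕ) + (b' : ℕ) → M a b = M a' b') ∧
  (∀ (a a' : Fin (s + t)) (b b' : Fin k), s ≤ (a : ℕ) → s ≤ (a' : ℕ) →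
    (a : ℕ) + (b : ℕ) = (a' : ℕ) + (b' : ℕ) → M a b = M a' b')

/-- `doublePersymRankCount s t k i` is the number of double persymmetric matrices of
type `[s; t] × k` over `F₂` of rank `i`. -/
noncomputable def doublePersymRankCount (s t k i : ℕ) : ℕ :=
  Nat.card {M : Matrix (Fin (s + t)) (Fin k) (ZMod 2) //
    IsDoublePersymmetric s t k M ∧ M.rank = i}

/-!
Encode a double persymmetric matrix of type `[2; 2] × k` by the sequence
`v j = (α j, β j) ∈ F₂²`, `j = 0, …, k`. A vector `c ∈ F₂⁴` is in the left kernel of the matrix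
iff `c₀ α_j + c₁ α_{j+1} + c₂ β_j + c₃ β_{j+1} = 0` for every `j`, a condition on consecutive
terms only, and the left kernel has `2 ^ (4 - rank)` elements. Hence the moment
`∑_v |ker v| ^ j` counts the pairs of a `j`-tuple of such constraints and a walk of length `k`
in the transition graph on `F₂²` that the constraints cut out. For `j ≤ 3` only 66 transition
graphs occur; a computation shows that their walk counts satisfy, from length 2 on, the linear
recurrence with characteristic polynomial `(X - 1)(X - 2)(X - 4)`, and gives the initial values.
So each moment is of the form `a 4ᵏ + b 2ᵏ + c`, and the moments for `j = 0, …, 3` together with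
the unique matrix of rank `0` determine the numbers of matrices of rank `1, …, 4`.
-/

open Finset Matrix

lemma Matrix.card_vecMul_eq_zero {K m n : Type*} [Field K] [Fintype K] [DecidableEq K]
    [Fintype m] [DecidableEq m] [Fintype n] (A : Matrix m n K) :
    #{c : m → K | c ᵥ* A = 0} = Fintype.card K ^ (Fintype.card m - A.rank) := by
  have hrange : Module.finrank K (LinearMap.range A.vecMulLinear) = A.rank := by
    rw [← mulVecLin_transpose, ← rank_transpose]
    rfl
  have hker : Module.finrank K (LinearMap.ker A.vecMulLinear) = Fintype.card m - A.rank := by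
    have := LinearMap.finrank_range_add_finrank_ker A.vecMulLinear
    rw [Module.finrank_fintype_fun_eq_card, hrange] at this
    omega
  rw [← hker, ← Nat.card_eq_fintype_card, ← Module.natCard_eq_pow_finrank,
    ← Fintype.card_subtype, ← Nat.card_eq_fintype_card]
  exact Nat.card_congr (Equiv.subtypeEquivRight fun c => by simp)

lemma Matrix.rank_eq_zero_iff {K m n : Type*} [Field K] [Fintype n] [DecidableEq n]
    (A : Matrix m n K) : A.rank = 0 ↔ A = 0 := by
  rw [rank, Submodule.finrank_eq_zero, LinearMap.range_eq_bot, ← toLin'_apply',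
    LinearEquiv.map_eq_zero_iff]

lemma Finset.sum_card_filter_pow {α β : Type*} [Fintype α] [Fintype β] (P : α → β → Prop)
    [∀ a b, Decidable (P a b)] (j : ℕ) :
    ∑ a, #{b | P a b} ^ j = ∑ bs : Fin j → β, #{a | ∀ i, P a (bs i)} := by
  have hpow (a : α) : #{b | P a b} ^ j = #{bs : Fin j → β | ∀ i, P a (bs i)} := by
    rw [← Fintype.card_piFinset_const]
    congr 1
    ext bs
    simp
  rw [sum_congr rfl fun a _ => hpow a]
  simp only [card_filter]
  exact Finset.sum_comm

lemma Fintype.sum_fin_succ_pi {β M : Type*} [Fintype β] [AddCommMonoid M] {n : ℕ}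
    (f : (Fin (n + 1) → β) → M) : ∑ bs, f bs = ∑ b, ∑ bs : Fin n → β, f (Fin.cons b bs) := by
  rw [← Fintype.sum_prod_type']
  exact (Fintype.sum_equiv (Fin.consEquiv fun _ => β) _ _ fun _ => rfl).symm

lemma LinearRecurrence.isSolution_sum {R ι : Type*} [CommSemiring R] {E : LinearRecurrence R}
    (s : Finset ι) {u : ι → ℕ → R} (h : ∀ i ∈ s, E.IsSolution (u i)) :
    E.IsSolution fun n => ∑ i ∈ s, u i n := by
  rw [← sum_fn]
  exact E.solSpace.sum_mem h

namespace DoublePersym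

section Walks

variable {α : Type*} (R : α → α → Prop)

def IsWalk {n : ℕ} (v : Fin (n + 1) → α) : Prop :=
  ∀ j : Fin n, R (v j.castSucc) (v j.succ)

variable {R} in
lemma isWalk_snoc {n : ℕ} (v : Fin (n + 1) → α) (w : α) :
    IsWalk R (Fin.snoc v w : Fin (n + 2) → α) ↔ IsWalk R v ∧ R (v (Fin.last n)) w := by
  simp only [IsWalk, Fin.forall_fin_succ', Fin.succ_castSucc, Fin.snoc_castSucc, Fin.succ_last,
    Fin.snoc_last]

variable [Fintype α] [DecidableRel R]

instance {n : ℕ} : DecidablePred (IsWalk R (n := n)) := fun _ => by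
  unfold IsWalk
  infer_instance

def walkCount : ℕ → α → ℕ
  | 0, _ => 1
  | n + 1, w => ∑ u with R u w, walkCount n u

lemma card_isWalk_last [DecidableEq α] (n : ℕ) (w : α) :
    #{v : Fin (n + 1) → α | IsWalk R v ∧ v (Fin.last n) = w} = walkCount R n w := by
  induction n generalizing w with
  | zero =>
    rw [walkCount, card_eq_one]
    refine ⟨fun _ => w, eq_singleton_iff_unique_mem.2 ⟨by simp [IsWalk], fun v hv => ?_⟩⟩
    funext j
    rw [Fin.fin_one_eq_zero j]
    exact (mem_filter.1 hv).2.2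
  | succ n ih =>
    calc #{v : Fin (n + 2) → α | IsWalk R v ∧ v (Fin.last (n + 1)) = w}
        = #{v : Fin (n + 1) → α | IsWalk R v ∧ R (v (Fin.last n)) w} := by
          refine card_nbij' Fin.init (Fin.snoc · w) (fun V hV => ?_) (fun v hv => ?_)
            (fun V hV => ?_) (fun v _ => Fin.init_snoc _ _)
          all_goals simp only [coe_filter, mem_univ, true_and, Set.mem_ofPred_eq] at *
          · rw [← isWalk_snoc, ← hV.2, Fin.snoc_init_self]
            exact hV.1
          · exact ⟨(isWalk_snoc v w).2 hv, Fin.snoc_last _ _⟩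
          · rw [← hV.2, Fin.snoc_init_self]
      _ = ∑ u with R u w, #{v : Fin (n + 1) → α | IsWalk R v ∧ v (Fin.last n) = u} := by
          rw [card_eq_sum_card_fiberwise (f := fun v => v (Fin.last n))
            (t := univ.filter (R · w)) (fun v hv => by simpa using (mem_filter.1 hv).2.2)]
          refine sum_congr rfl fun u hu => ?_
          rw [filter_filter]
          refine congrArg card (filter_congr fun v _ => ?_)
          constructor
          · rintro ⟨⟨hv, -⟩, rfl⟩
            exact ⟨hv, rfl⟩
          · rintro ⟨hv, rfl⟩
            exact ⟨⟨hv, (mem_filter.1 hu).2⟩, rfl⟩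
      _ = walkCount R (n + 1) w := by simp only [ih, walkCount]

lemma card_isWalk [DecidableEq α] (n : ℕ) :
    #{v : Fin (n + 1) → α | IsWalk R v} = ∑ w, walkCount R n w := by
  rw [card_eq_sum_card_fiberwise (f := fun v => v (Fin.last n)) (fun _ _ => mem_univ _)]
  simp only [filter_filter, card_isWalk_last]

/-- The step `n → n + 1` of walk counts is linear (the transfer matrix of `R`), so it preserves
linear recurrences. -/
lemma walkCount_isSolution (E : LinearRecurrence ℤ) (m : ℕ)
    (h : ∀ w, (walkCount R (E.order + m) w : ℤ) = ∑ i, E.coeffs i * walkCount R (i + m) w)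
    (w : α) : E.IsSolution fun n => (walkCount R (n + m) w : ℤ) := by
  intro n
  induction n generalizing w with
  | zero => simpa using h w
  | succ n ih =>
    have hstep (p : ℕ) :
        walkCount R (n + 1 + p + m) w = ∑ u with R u w, walkCount R (n + p + m) u := by
      rw [show n + 1 + p + m = n + p + m + 1 by ring, walkCount]
    simp only [hstep, Nat.cast_sum, ih, mul_sum]
    exact sum_comm

variable {R} in
lemma walkCount_congr {R' : α → α → Prop} [DecidableRel R'] (h : ∀ u w, R u w ↔ R' u w) :
    walkCount R = walkCount R' := by
  obtain rfl : R = R' := funext₂ fun u w => propext (h u w)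
  congr

end Walks

variable {k : ℕ}

def seqMatrix (v : Fin (k + 1) → ZMod 2 × ZMod 2) : Matrix (Fin (2 + 2)) (Fin k) (ZMod 2) :=
  of ![fun b => (v b.castSucc).1, fun b => (v b.succ).1,
    fun b => (v b.castSucc).2, fun b => (v b.succ).2]

lemma seqMatrix_apply_of_lt (v : Fin (k + 1) → ZMod 2 × ZMod 2) (a : Fin (2 + 2)) (b : Fin k)
    (ha : (a : ℕ) < 2) : seqMatrix v a b = (v ⟨b + a, by omega⟩).1 := by
  obtain ⟨_ | _ | a, _⟩ := a
  · rfl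
  · rfl
  · simp at ha

lemma seqMatrix_apply_of_le (v : Fin (k + 1) → ZMod 2 × ZMod 2) (a : Fin (2 + 2)) (b : Fin k)
    (ha : 2 ≤ (a : ℕ)) : seqMatrix v a b = (v ⟨b + a - 2, by omega⟩).2 := by
  obtain ⟨_ | _ | _ | _ | a, _⟩ := a
  any_goals simp at ha
  · rfl
  · rfl
  · omega

lemma isDoublePersymmetric_seqMatrix (v : Fin (k + 1) → ZMod 2 × ZMod 2) :
    IsDoublePersymmetric 2 2 k (seqMatrix v) := by
  constructor
  · intro a a' b b' ha ha' h
    simp only [seqMatrix_apply_of_lt v _ _ ha, seqMatrix_apply_of_lt v _ _ ha', add_comm (b : ℕ),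
      add_comm (b' : ℕ), h]
  · intro a a' b b' ha ha' h
    simp only [seqMatrix_apply_of_le v _ _ ha, seqMatrix_apply_of_le v _ _ ha', add_comm (b : ℕ),
      add_comm (b' : ℕ), h]

def matrixSeq (hk : 0 < k) (M : Matrix (Fin (2 + 2)) (Fin k) (ZMod 2)) (j : Fin (k + 1)) :
    ZMod 2 × ZMod 2 :=
  if h : (j : ℕ) < k then (M 0 ⟨j, h⟩, M 2 ⟨j, h⟩)
  else (M 1 ⟨k - 1, by omega⟩, M 3 ⟨k - 1, by omega⟩)

lemma matrixSeq_seqMatrix (hk : 0 < k) (v : Fin (k + 1) → ZMod 2 × ZMod 2) :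
    matrixSeq hk (seqMatrix v) = v := by
  funext j
  by_cases h : (j : ℕ) < k
  · simp [matrixSeq, seqMatrix, h]
  · have hj : (⟨k - 1, by omega⟩ : Fin k).succ = j := Fin.ext (by simp; omega)
    simp [matrixSeq, h, seqMatrix, hj]

lemma seqMatrix_matrixSeq (hk : 0 < k) {M : Matrix (Fin (2 + 2)) (Fin k) (ZMod 2)}
    (hM : IsDoublePersymmetric 2 2 k M) : seqMatrix (matrixSeq hk M) = M := by
  ext a b
  have hb := b.isLt
  by_cases ha : (a : ℕ) < 2
  · rw [seqMatrix_apply_of_lt _ _ _ ha, matrixSeq]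
    split_ifs with h
    · exact hM.1 0 a _ b (by simp) ha (by simp; omega)
    · exact hM.1 1 a _ b (by simp) ha (by simp at h ⊢; omega)
  · rw [seqMatrix_apply_of_le _ _ _ (by omega), matrixSeq]
    split_ifs with h
    · exact hM.2 2 a _ b (by simp) (by omega) (by simp; omega)
    · exact hM.2 3 a _ b (by simp) (by omega) (by simp at h ⊢; omega)

def seqMatrixEquiv (hk : 0 < k) :
    (Fin (k + 1) → ZMod 2 × ZMod 2) ≃ {M // IsDoublePersymmetric 2 2 k M} where
  toFun v := ⟨seqMatrix v, isDoublePersymmetric_seqMatrix v⟩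
  invFun M := matrixSeq hk M
  left_inv := matrixSeq_seqMatrix hk
  right_inv M := Subtype.ext (seqMatrix_matrixSeq hk M.2)

lemma doublePersymRankCount_eq_card (hk : 0 < k) (i : ℕ) :
    doublePersymRankCount 2 2 k i =
      #{v : Fin (k + 1) → ZMod 2 × ZMod 2 | (seqMatrix v).rank = i} := by
  rw [doublePersymRankCount, ← Fintype.card_subtype, ← Nat.card_eq_fintype_card]
  exact Nat.card_congr (((seqMatrixEquiv hk).subtypeEquiv fun _ => Iff.rfl).trans
    (Equiv.subtypeSubtypeEquivSubtypeInter _ (fun M => M.rank = i))).symm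

lemma card_rank_seqMatrix_eq_zero (hk : 0 < k) :
    #{v : Fin (k + 1) → ZMod 2 × ZMod 2 | (seqMatrix v).rank = 0} = 1 := by
  have hzero : seqMatrix (0 : Fin (k + 1) → ZMod 2 × ZMod 2) = 0 := by
    ext a b
    fin_cases a <;> rfl
  rw [card_eq_one]
  refine ⟨0, eq_singleton_iff_unique_mem.2 ⟨by simp [hzero], fun v hv => ?_⟩⟩
  rw [mem_filter, Matrix.rank_eq_zero_iff, ← hzero] at hv
  exact (seqMatrixEquiv hk).injective (Subtype.ext hv.2)

/-- `c` applied to the column `(u.1, w.1, u.2, w.2)` of `seqMatrix` made of consecutive terms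
`u, w` of the sequence. -/
def pairForm (c : Fin 4 → ZMod 2) (u w : ZMod 2 × ZMod 2) : ZMod 2 :=
  c 0 * u.1 + c 1 * w.1 + c 2 * u.2 + c 3 * w.2

def leftKernel (v : Fin (k + 1) → ZMod 2 × ZMod 2) : Finset (Fin 4 → ZMod 2) :=
  {c | c ᵥ* seqMatrix v = 0}

lemma vecMul_seqMatrix_eq_zero_iff (c : Fin 4 → ZMod 2) (v : Fin (k + 1) → ZMod 2 × ZMod 2) :
    c ᵥ* seqMatrix v = 0 ↔ IsWalk (fun u w => pairForm c u w = 0) v := by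
  simp only [funext_iff, Pi.zero_apply, IsWalk]
  refine forall_congr' fun j => ?_
  simp [vecMul, dotProduct, Fin.sum_univ_four, seqMatrix, pairForm]

lemma card_leftKernel (v : Fin (k + 1) → ZMod 2 × ZMod 2) :
    #(leftKernel v) = 2 ^ (4 - (seqMatrix v).rank) :=
  (seqMatrix v).card_vecMul_eq_zero

/-- Bit `pairIndex u w` of a mask records whether the transition `u → w` is allowed. -/
def pairIndex (u w : ZMod 2 × ZMod 2) : ℕ := u.1.val + 2 * u.2.val + 4 * w.1.val + 8 * w.2.val

def maskRel (m : ℕ) (u w : ZMod 2 × ZMod 2) : Prop := m.testBit (pairIndex u w)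

instance (m : ℕ) : DecidableRel (maskRel m) := fun _ _ => inferInstanceAs (Decidable (_ = true))

def stepMask (c : Fin 4 → ZMod 2) : ℕ :=
  ∑ u, ∑ w, if pairForm c u w = 0 then 2 ^ pairIndex u w else 0

lemma maskRel_stepMask : ∀ c u w, maskRel (stepMask c) u w ↔ pairForm c u w = 0 := by
  decide +kernel

def constraintMask : {j : ℕ} → (Fin j → Fin 4 → ZMod 2) → ℕ
  | 0, _ => 2 ^ 16 - 1
  | _ + 1, cs => stepMask (cs 0) &&& constraintMask (Fin.tail cs)

lemma maskRel_constraintMask {j : ℕ} (cs : Fin j → Fin 4 → ZMod 2) (u w : ZMod 2 × ZMod 2) :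
    maskRel (constraintMask cs) u w ↔ ∀ i, pairForm (cs i) u w = 0 := by
  induction j with
  | zero =>
    have : pairIndex u w < 16 := by revert u w; decide
    simp only [constraintMask, maskRel, Nat.testBit_two_pow_sub_one, this, decide_true,
      IsEmpty.forall_iff]
  | succ j ih =>
    rw [Fin.forall_fin_succ, ← maskRel_stepMask, ← ih]
    simp only [constraintMask, maskRel, Nat.testBit_land, Bool.and_eq_true]
    rfl

def walkTotal (m n : ℕ) : ℕ := ∑ w, walkCount (maskRel m) n w

lemma sum_card_leftKernel_pow (j k : ℕ) :
    ∑ v : Fin (k + 1) → ZMod 2 × ZMod 2, #(leftKernel v) ^ j =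
      ∑ cs : Fin j → Fin 4 → ZMod 2, walkTotal (constraintMask cs) k := by
  simp only [leftKernel]
  rw [sum_card_filter_pow]
  refine sum_congr rfl fun cs _ => ?_
  rw [walkTotal, ← walkCount_congr fun u w => (maskRel_constraintMask cs u w).symm,
    ← card_isWalk]
  refine congrArg card (filter_congr fun v _ => ?_)
  simp only [vecMul_seqMatrix_eq_zero_iff, IsWalk]
  exact forall_comm

/-- The masks of all tuples of at most three constraints: the indicator masks of the 66 nonzero
subspaces of `F₂² × F₂²`. -/
def transitionMasks : List ℕ := [3, 5, 9, 15, 17, 33, 51, 65, 85, 105, 129, 153, 165, 195, 255,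
  257, 513, 771, 1025, 1285, 1545, 2049, 2313, 2565, 3075, 3855, 4097, 4369, 4641, 5185,
  6273, 8193, 8481, 8721, 9345, 10305, 12291, 13107, 15555, 16385, 16705, 17025, 17425,
  18465, 20485, 21845, 23205, 24585, 26265, 26985, 32769, 33153, 33345, 33825, 34833,
  36873, 38505, 39321, 40965, 42405, 43605, 49155, 50115, 52275, 61455, 65535]

lemma constraintMask_mem {j : ℕ} (hj : j ≤ 3) (cs : Fin j → Fin 4 → ZMod 2) :
    constraintMask cs ∈ transitionMasks := by
  revert cs
  interval_cases j <;>
    simp only [Fin.forall_fin_succ_pi, Fin.forall_fin_zero_pi, constraintMask, Fin.cons_zero,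
      Fin.tail_cons] <;>
    decide +kernel

/-- The recurrence with characteristic polynomial `(X - 1)(X - 2)(X - 4)`. -/
def rec124 : LinearRecurrence ℤ := ⟨3, ![8, -14, 7]⟩

lemma walkCount_maskRel_rec : ∀ m ∈ transitionMasks, ∀ w,
    (walkCount (maskRel m) (rec124.order + 2) w : ℤ) =
      ∑ i, rec124.coeffs i * walkCount (maskRel m) (i + 2) w := by
  decide +kernel

def walkTotals (m : ℕ) : ℕ × ℕ × ℕ := (walkTotal m 2, walkTotal m 3, walkTotal m 4)

/-- Looking the totals up in this table lets the kernel evaluate `walkTotals m` once per mask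
rather than once per constraint tuple. -/
def walkTotalsTable : List (ℕ × ℕ × ℕ × ℕ) := transitionMasks.map fun m => (m, walkTotals m)

def cachedWalkTotals (m : ℕ) : ℕ × ℕ × ℕ := (walkTotalsTable.lookup m).getD 0

lemma cachedWalkTotals_eq : ∀ m ∈ transitionMasks, cachedWalkTotals m = walkTotals m := by
  decide +kernel

def momentClosedForm (j : Fin 4) (k : ℕ) : ℕ :=
  4 * 4 ^ k + ![0, 60, 216, 672] j * 2 ^ k + ![0, 0, 768, 9408] j

lemma sum_walkTotals (j : Fin 4) :
    ∑ cs : Fin j → Fin 4 → ZMod 2, walkTotals (constraintMask cs) =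
      (momentClosedForm j 2, momentClosedForm j 3, momentClosedForm j 4) := by
  rw [← sum_congr rfl fun cs _ => cachedWalkTotals_eq _ (constraintMask_mem (by omega) cs)]
  fin_cases j <;>
    simp only [Fin.mk_one, Fin.zero_eta, Fin.reduceFinMk, Fin.isValue, Fin.coe_ofNat_eq_mod,
      Nat.reduceMod, Fintype.sum_fin_succ_pi (β := Fin 4 → ZMod 2), Fintype.sum_unique,
      constraintMask, Fin.cons_zero, Fin.tail_cons] <;>
    decide +kernel

lemma momentClosedForm_isSolution (j : Fin 4) :
    rec124.IsSolution fun n => (momentClosedForm j (n + 2) : ℤ) := by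
  intro n
  change (momentClosedForm j (n + 3 + 2) : ℤ) =
    ∑ i : Fin 3, ![8, -14, 7] i * (momentClosedForm j (n + i + 2) : ℤ)
  simp only [momentClosedForm, Fin.sum_univ_three, Fin.isValue, Fin.coe_ofNat_eq_mod, Nat.zero_mod,
    Nat.one_mod, Nat.mod_succ, cons_val_zero, cons_val_one, Matrix.cons_val, Nat.cast_add,
    Nat.cast_mul, Nat.cast_ofNat, Nat.cast_pow]
  ring

lemma sum_card_leftKernel_pow_eq_momentClosedForm (j : Fin 4) (hk : 2 ≤ k) :
    ∑ v : Fin (k + 1) → ZMod 2 × ZMod 2, #(leftKernel v) ^ (j : ℕ) = momentClosedForm j k := by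
  obtain ⟨n, rfl⟩ : ∃ n, k = n + 2 := ⟨k - 2, by omega⟩
  rw [sum_card_leftKernel_pow]
  have hsol : rec124.IsSolution fun n =>
      ((∑ cs : Fin j → Fin 4 → ZMod 2, walkTotal (constraintMask cs) (n + 2) : ℕ) : ℤ) := by
    simp only [walkTotal, Nat.cast_sum]
    refine LinearRecurrence.isSolution_sum _ fun cs _ => LinearRecurrence.isSolution_sum _
      fun w _ => walkCount_isSolution _ _ 2 (walkCount_maskRel_rec _ ?_) w
    exact constraintMask_mem (by omega) cs
  have hinit := sum_walkTotals j
  simp only [walkTotals, Prod.ext_iff, Prod.fst_sum, Prod.snd_sum] at hinit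
  obtain ⟨h2, h3, h4⟩ := hinit
  have := (rec124.eq_iff_eqOn_range_order _ _ hsol (momentClosedForm_isSolution j)).2
    (by
      intro i hi
      simp only [rec124, coe_range, Set.mem_Iio] at hi
      interval_cases i <;> dsimp only
      · exact_mod_cast h2
      · exact_mod_cast h3
      · exact_mod_cast h4)
  exact_mod_cast congrFun this n

lemma sum_comp_rank_seqMatrix (f : ℕ → ℤ) :
    ∑ v : Fin (k + 1) → ZMod 2 × ZMod 2, f (seqMatrix v).rank =
      ∑ i ∈ range 5, #{v : Fin (k + 1) → ZMod 2 × ZMod 2 | (seqMatrix v).rank = i} * f i := by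
  rw [← sum_fiberwise_of_maps_to (g := fun v => (seqMatrix v).rank) (t := range 5)
    fun v _ => mem_range.2 (Nat.lt_succ_of_le ((seqMatrix v).rank_le_card_height.trans (by simp)))]
  refine sum_congr rfl fun i _ => ?_
  rw [sum_congr rfl fun v hv => by rw [(mem_filter.1 hv).2], sum_const, nsmul_eq_mul]

lemma doublePersymRankCount_two_two (hk : 2 ≤ k) :
    (doublePersymRankCount 2 2 k 1 : ℤ) = 9 ∧
    (doublePersymRankCount 2 2 k 2 : ℤ) = 3 * 2 ^ (k + 1) + 30 ∧
    (doublePersymRankCount 2 2 k 3 : ℤ) = 21 * 2 ^ (k + 1) - 168 ∧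
    (doublePersymRankCount 2 2 k 4 : ℤ) = 2 ^ (2 * k + 2) - 3 * 2 ^ (k + 4) + 128 := by
  set N : ℕ → ℤ := fun i => doublePersymRankCount 2 2 k i
  have hmoment (j : Fin 4) :
      ∑ i ∈ range 5, N i * 2 ^ ((4 - i) * j) = momentClosedForm j k := by
    rw [← sum_card_leftKernel_pow_eq_momentClosedForm j hk]
    simp only [N, card_leftKernel, ← pow_mul, Nat.cast_sum, Nat.cast_pow, Nat.cast_ofNat,
      sum_comp_rank_seqMatrix fun i => (2 : ℤ) ^ ((4 - i) * j),
      doublePersymRankCount_eq_card (by omega : 0 < k)]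
  have e0 : N 0 + N 1 + N 2 + N 3 + N 4 = 4 * 4 ^ k := by
    simpa [sum_range_succ, momentClosedForm] using hmoment 0
  have e1 : N 0 * 16 + N 1 * 8 + N 2 * 4 + N 3 * 2 + N 4 = 4 * 4 ^ k + 60 * 2 ^ k := by
    simpa [sum_range_succ, momentClosedForm] using hmoment 1
  have e2 : N 0 * 256 + N 1 * 64 + N 2 * 16 + N 3 * 4 + N 4 = 4 * 4 ^ k + 216 * 2 ^ k + 768 := by
    simpa [sum_range_succ, momentClosedForm] using hmoment 2
  have e3 : N 0 * 4096 + N 1 * 512 + N 2 * 64 + N 3 * 8 + N 4 =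
      4 * 4 ^ k + 672 * 2 ^ k + 9408 := by
    simpa [sum_range_succ, momentClosedForm] using hmoment 3
  have h0 : N 0 = 1 := by
    simp only [N, doublePersymRankCount_eq_card (by omega : 0 < k),
      card_rank_seqMatrix_eq_zero (by omega : 0 < k), Nat.cast_one]
  have h4k : (4 : ℤ) ^ k = 2 ^ k * 2 ^ k := by rw [← mul_pow]; norm_num
  rw [show 2 * k + 2 = k + k + 2 by ring]
  simp only [pow_add, h4k] at e0 e1 e2 e3 ⊢
  refine ⟨by linarith, by linarith, by linarith, by linarith⟩

end DoublePersym

theorem doublePersym_two_two (k : ℕ) :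
    (1 ≤ k → doublePersymRankCount 2 2 k 0 = 1) ∧
    (1 < k → doublePersymRankCount 2 2 k 1 = 9) ∧
    (2 < k → (doublePersymRankCount 2 2 k 2 : ℤ) = 3 * 2 ^ (k + 1) + 30) ∧
    (3 < k → (doublePersymRankCount 2 2 k 3 : ℤ) = 21 * 2 ^ (k + 1) - 168) ∧
    (4 ≤ k → (doublePersymRankCount 2 2 k 4 : ℤ) = 2 ^ (2 * k + 2) - 3 * 2 ^ (k + 4) + 128) := by
  refine ⟨fun hk => ?_, fun hk => ?_, fun hk => ?_, fun hk => ?_, fun hk => ?_⟩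
  · rw [DoublePersym.doublePersymRankCount_eq_card hk,
      DoublePersym.card_rank_seqMatrix_eq_zero hk]
  · exact_mod_cast (DoublePersym.doublePersymRankCount_two_two hk).1
  · exact (DoublePersym.doublePersymRankCount_two_two (by omega)).2.1
  · exact (DoublePersym.doublePersymRankCount_two_two (by omega)).2.2.1
  · exact (DoublePersym.doublePersymRankCount_two_two (by omega)).2.2.2
end

section
/- For each i with 0 ≤ i ≤ 4, the number Γ_i^{[2;5]×4} of double persymmetric matrices of type [2;5]×4 over F₂ (a 7×4 matrix with a persymmetric 2×4 block on top of a persymmetric 5×4 block) of rank i equals: 1 if i = 0, 9 if i = 1, 94 if i = 2, 600 if i = 3, and 7488 if i = 4. -/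
/-!
A double persymmetric matrix of type `[s; t] × k` is determined by its two sequences, so those of
type `[2; 5] × 4` are in bijection with `F₂⁵ × F₂⁸`. By rank–nullity, rank `i` means a kernel of
size `2 ^ (4 - i)`, so the theorem is a finite count: encode sequences and vectors by their
binary digits and, for each of the `2 ^ 13` pairs of sequences, count the `v ∈ F₂⁴` orthogonal
to all seven rows, a row being a window of four consecutive digits of its sequence.
-/

open Finset Matrix

section Parametrization

variable {s t k : ℕ}

def doublePersymOfSeqs (α : Fin (s + k - 1) → ZMod 2) (β : Fin (t + k - 1) → ZMod 2) :
    Matrix (Fin (s + t)) (Fin k) (ZMod 2) :=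
  fun i j => if h : (i : ℕ) < s then α ⟨i + j, by omega⟩ else β ⟨i - s + j, by omega⟩

theorem isDoublePersymmetric_doublePersymOfSeqs (α : Fin (s + k - 1) → ZMod 2)
    (β : Fin (t + k - 1) → ZMod 2) : IsDoublePersymmetric s t k (doublePersymOfSeqs α β) := by
  refine ⟨fun a a' b b' ha ha' hab => ?_, fun a a' b b' ha ha' hab => ?_⟩ <;>
    simp only [doublePersymOfSeqs] <;> split_ifs <;>
      first | omega | exact congrArg _ (Fin.ext (by simp only; omega))

/-- `α` and `β` are read off along the first row and then the last column of each block. -/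
def doublePersymSeqs (hs : 0 < s) (ht : 0 < t) (hk : 0 < k)
    (M : Matrix (Fin (s + t)) (Fin k) (ZMod 2)) :
    (Fin (s + k - 1) → ZMod 2) × (Fin (t + k - 1) → ZMod 2) :=
  (fun m => M ⟨m - min (m : ℕ) (k - 1), by omega⟩ ⟨min m (k - 1), by omega⟩,
    fun m => M ⟨s + (m - min (m : ℕ) (k - 1)), by omega⟩ ⟨min m (k - 1), by omega⟩)

def doublePersymEquiv (hs : 0 < s) (ht : 0 < t) (hk : 0 < k) :
    (Fin (s + k - 1) → ZMod 2) × (Fin (t + k - 1) → ZMod 2) ≃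
      {M : Matrix (Fin (s + t)) (Fin k) (ZMod 2) // IsDoublePersymmetric s t k M} where
  toFun p := ⟨doublePersymOfSeqs p.1 p.2, isDoublePersymmetric_doublePersymOfSeqs p.1 p.2⟩
  invFun M := doublePersymSeqs hs ht hk M
  left_inv p := by
    ext m
    · have top : (m : ℕ) - min (m : ℕ) (k - 1) < s := by omega
      simp only [doublePersymSeqs, doublePersymOfSeqs, dif_pos top]
      exact congrArg p.1 (Fin.ext (by simp only; omega))
    · have bottom : ¬ s + ((m : ℕ) - min (m : ℕ) (k - 1)) < s := by omega
      simp only [doublePersymSeqs, doublePersymOfSeqs, dif_neg bottom]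
      exact congrArg p.2 (Fin.ext (by simp only; omega))
  right_inv M := by
    obtain ⟨M, hM₁, hM₂⟩ := M
    ext i j
    simp only [doublePersymSeqs, doublePersymOfSeqs]
    split_ifs with h
    · exact hM₁ _ _ _ _ (by simp only; omega) h (by simp only; omega)
    · exact hM₂ _ _ _ _ (by simp) (by omega) (by simp only; omega)

end Parametrization

section KernelCount

variable {K m n : Type*} [Field K] [Fintype n]

theorem Matrix.natCard_ker_mulVec (A : Matrix m n K) :
    Nat.card {v : n → K // A *ᵥ v = 0} = Nat.card K ^ (Fintype.card n - A.rank) := by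
  have rank_nullity := A.mulVecLin.finrank_range_add_finrank_ker
  rw [Module.finrank_fintype_fun_eq_card, ← Matrix.rank] at rank_nullity
  change Nat.card (LinearMap.ker A.mulVecLin) = _
  rw [Module.natCard_eq_pow_finrank (K := K)]
  congr 1
  omega

theorem Matrix.rank_eq_iff_natCard_ker [Finite K] {A : Matrix m n K} {r : ℕ}
    (hr : r ≤ Fintype.card n) :
    A.rank = r ↔ Nat.card {v : n → K // A *ᵥ v = 0} = Nat.card K ^ (Fintype.card n - r) := by
  rw [A.natCard_ker_mulVec, (Nat.pow_right_injective Finite.one_lt_card).eq_iff]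
  have := A.rank_le_card_width
  omega

end KernelCount

section BinaryEncoding

def windowDot (k a i v : ℕ) : ℕ := ∑ j ∈ range k, a / 2 ^ (i + j) % 2 * (v / 2 ^ j % 2)

def IsPersymKernelCode (s k a v : ℕ) : Prop := ∀ i < s, 2 ∣ windowDot k a i v

instance (s k a v : ℕ) : Decidable (IsPersymKernelCode s k a v) :=
  inferInstanceAs (Decidable (∀ i < s, _))

def binaryDigits (n : ℕ) : Fin (2 ^ n) ≃ (Fin n → ZMod 2) := finFunctionFinEquiv.symm

theorem binaryDigits_apply {n : ℕ} (a : Fin (2 ^ n)) (j : Fin n) :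
    binaryDigits n a j = ((a / 2 ^ (j : ℕ) % 2 : ℕ) : ZMod 2) := by
  rw [← ZMod.natCast_zmod_val (binaryDigits n a j)]
  exact congrArg _ (finFunctionFinEquiv_symm_apply_val a j)

variable {s t k : ℕ}

theorem doublePersymOfSeqs_binaryDigits_mulVec (a : Fin (2 ^ (s + k - 1)))
    (b : Fin (2 ^ (t + k - 1))) (v : Fin (2 ^ k)) (i : Fin (s + t)) :
    (doublePersymOfSeqs (binaryDigits _ a) (binaryDigits _ b) *ᵥ binaryDigits k v) i =
      if (i : ℕ) < s then (windowDot k a i v : ZMod 2)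
      else (windowDot k b (i - s) v : ZMod 2) := by
  simp only [mulVec, dotProduct, doublePersymOfSeqs, windowDot, binaryDigits_apply]
  split_ifs <;> push_cast <;> rw [Finset.sum_range]

theorem doublePersymOfSeqs_binaryDigits_mulVec_eq_zero_iff (a : Fin (2 ^ (s + k - 1)))
    (b : Fin (2 ^ (t + k - 1))) (v : Fin (2 ^ k)) :
    doublePersymOfSeqs (binaryDigits _ a) (binaryDigits _ b) *ᵥ binaryDigits k v = 0 ↔
      IsPersymKernelCode s k a v ∧ IsPersymKernelCode t k b v := by
  rw [funext_iff, Fin.forall_fin_add]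
  simp only [doublePersymOfSeqs_binaryDigits_mulVec, Pi.zero_apply, Fin.val_castAdd,
    Fin.val_natAdd, Fin.is_lt, if_true, add_lt_iff_neg_left, not_lt_zero, if_false,
    add_tsub_cancel_left, ZMod.natCast_eq_zero_iff, Fin.forall_iff, IsPersymKernelCode]

end BinaryEncoding

section Counting

def doublePersymKernelCount (s t k a b : ℕ) : ℕ :=
  ∑ v ∈ range (2 ^ k), if IsPersymKernelCode s k a v ∧ IsPersymKernelCode t k b v then 1 else 0

/- Each `IsPersymKernelCode` test involves only one of `a`, `b`, so when the kernel evaluates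
this sum its cache shares the test across the other loop. -/
def doublePersymRankCountCode (s t k r : ℕ) : ℕ :=
  ∑ a ∈ range (2 ^ (s + k - 1)), ∑ b ∈ range (2 ^ (t + k - 1)),
    if doublePersymKernelCount s t k a b = 2 ^ (k - r) then 1 else 0

variable {s t k : ℕ}

theorem natCard_ker_doublePersymOfSeqs_binaryDigits (a : Fin (2 ^ (s + k - 1)))
    (b : Fin (2 ^ (t + k - 1))) :
    Nat.card {v // doublePersymOfSeqs (binaryDigits _ a) (binaryDigits _ b) *ᵥ v = 0} =
      doublePersymKernelCount s t k a b := by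
  rw [← Nat.card_congr ((binaryDigits k).subtypeEquiv fun v => Iff.rfl), Nat.card_eq_fintype_card,
    Fintype.card_subtype, card_filter]
  simp_rw [doublePersymOfSeqs_binaryDigits_mulVec_eq_zero_iff]
  exact Fin.sum_univ_eq_sum_range
    (fun v => if IsPersymKernelCode s k a v ∧ IsPersymKernelCode t k b v then 1 else 0) _

theorem doublePersymRankCount_eq_code (hs : 0 < s) (ht : 0 < t) (hk : 0 < k) {r : ℕ}
    (hr : r ≤ k) : doublePersymRankCount s t k r = doublePersymRankCountCode s t k r := by
  let digits := (binaryDigits (s + k - 1)).prodCongr (binaryDigits (t + k - 1))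
  calc doublePersymRankCount s t k r
      = Nat.card {p : (Fin (s + k - 1) → ZMod 2) × (Fin (t + k - 1) → ZMod 2) //
          (doublePersymOfSeqs p.1 p.2).rank = r} :=
        Nat.card_congr <| (Equiv.subtypeSubtypeEquivSubtypeInter _ _).symm.trans
          ((doublePersymEquiv hs ht hk).subtypeEquiv fun _ => Iff.rfl).symm
    _ = Nat.card {c : Fin (2 ^ (s + k - 1)) × Fin (2 ^ (t + k - 1)) //
          (doublePersymOfSeqs (binaryDigits _ c.1) (binaryDigits _ c.2)).rank = r} :=
        (Nat.card_congr (digits.subtypeEquiv fun _ => Iff.rfl)).symm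
    _ = ∑ c : Fin (2 ^ (s + k - 1)) × Fin (2 ^ (t + k - 1)),
          if doublePersymKernelCount s t k c.1 c.2 = 2 ^ (k - r) then 1 else 0 := by
        rw [Nat.card_eq_fintype_card, Fintype.card_subtype, card_filter]
        simp_rw [rank_eq_iff_natCard_ker (Fintype.card_fin k ▸ hr), Fintype.card_fin,
          natCard_ker_doublePersymOfSeqs_binaryDigits, Nat.card_zmod]
    _ = doublePersymRankCountCode s t k r := by
        rw [Fintype.sum_prod_type, doublePersymRankCountCode]
        simp_rw [Finset.sum_range]

end Counting

theorem doublePersym_two_five_four :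
    doublePersymRankCount 2 5 4 0 = 1 ∧
    doublePersymRankCount 2 5 4 1 = 9 ∧
    doublePersymRankCount 2 5 4 2 = 94 ∧
    doublePersymRankCount 2 5 4 3 = 600 ∧
    doublePersymRankCount 2 5 4 4 = 7488 := by
  simp (disch := omega) only [doublePersymRankCount_eq_code (s := 2) (t := 5) (k := 4)
    two_pos (by norm_num) four_pos]
  decide +kernel
end

section
/- For each i with 0 ≤ i ≤ 2, the number Γ_i^{[2;2;2]×2} of triple persymmetric matrices of type [2;2;2]×2 over F₂ of rank i equals: 1 if i = 0, 21 if i = 1, and 490 if i = 2. -/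
/-!
A triple persymmetric matrix is determined by its three defining sequences, and every choice
of sequences occurs; for type `[2; 2; 2] × 2` this parametrises the matrices by `(F₂³)³`, 512
in all. Over a finite field `K` the column space of `M` is the image of `v ↦ M *ᵥ v` and has
`|K| ^ rank M` elements, so the rank of each of the 512 matrices is computable and the three
counts are a finite evaluation.
-/

/-- A `(s+t+u) × k` matrix over `F₂` is triple persymmetric of type `[s; t; u] × k` if
each of its three stacked blocks (of `s`, `t` and `u` rows respectively) is constant
along anti-diagonals. -/
def IsTriplePersymmetric (s t u k : ℕ) (M : Matrix (Fin (s + t + u)) (Fin k) (ZMod 2)) :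
    Prop :=
  (∀ (a a' : Fin (s + t + u)) (b b' : Fin k), (a : ℕ) < s → (a' : ℕ) < s →
    (a : ℕ) + (b : ℕ) = (a' : ℕ) + (b' : ℕ) → M a b = M a' b') ∧
  (∀ (a a' : Fin (s + t + u)) (b b' : Fin k),
    s ≤ (a : ℕ) → (a : ℕ) < s + t → s ≤ (a' : ℕ) → (a' : ℕ) < s + t →
    (a : ℕ) + (b : ℕ) = (a' : ℕ) + (b' : ℕ) → M a b = M a' b') ∧
  (∀ (a a' : Fin (s + t + u)) (b b' : Fin k), s + t ≤ (a : ℕ) → s + t ≤ (a' : ℕ) →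
    (a : ℕ) + (b : ℕ) = (a' : ℕ) + (b' : ℕ) → M a b = M a' b')

/-- `triplePersymRankCount s t u k i` is the number of triple persymmetric matrices of
type `[s; t; u] × k` over `F₂` of rank `i`. -/
noncomputable def triplePersymRankCount (s t u k i : ℕ) : ℕ :=
  Nat.card {M : Matrix (Fin (s + t + u)) (Fin k) (ZMod 2) //
    IsTriplePersymmetric s t u k M ∧ M.rank = i}

open Matrix

theorem Matrix.card_image_mulVec_eq_pow_rank {K m n : Type*} [Field K] [Fintype K]
    [DecidableEq K] [Fintype m] [Fintype n] [DecidableEq n] (M : Matrix m n K) :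
    (Finset.univ.image (M *ᵥ ·)).card = Fintype.card K ^ M.rank := by
  rw [Matrix.rank, ← Nat.card_eq_fintype_card, ← Module.natCard_eq_pow_finrank,
    ← Nat.card_eq_finsetCard]
  simp only [Finset.mem_image, Finset.mem_univ, true_and, LinearMap.mem_range, mulVecLin_apply]

theorem Matrix.rank_eq_iff_card_image_mulVec {K m n : Type*} [Field K] [Fintype K]
    [DecidableEq K] [Fintype m] [Fintype n] [DecidableEq n] (M : Matrix m n K) (i : ℕ) :
    M.rank = i ↔ (Finset.univ.image (M *ᵥ ·)).card = Fintype.card K ^ i := by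
  rw [card_image_mulVec_eq_pow_rank, Nat.pow_right_inj Fintype.one_lt_card]

section TriplePersymmetric

variable {s t u k : ℕ}

def triplePersymMatrix {R : Type*} (α : Fin (s + k - 1) → R) (β : Fin (t + k - 1) → R)
    (γ : Fin (u + k - 1) → R) : Matrix (Fin (s + t + u)) (Fin k) R :=
  Matrix.of fun a b =>
    if h : a < s then α ⟨a + b, by omega⟩
    else if h : a < s + t then β ⟨a - s + b, by omega⟩
    else γ ⟨a - s - t + b, by omega⟩

theorem isTriplePersymmetric_triplePersymMatrix (α : Fin (s + k - 1) → ZMod 2)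
    (β : Fin (t + k - 1) → ZMod 2) (γ : Fin (u + k - 1) → ZMod 2) :
    IsTriplePersymmetric s t u k (triplePersymMatrix α β γ) := by
  refine ⟨?_, ?_, ?_⟩ <;> intros <;>
  simp only [triplePersymMatrix, of_apply] <;> split_ifs <;> first | omega | congr 2 <;> omega

def triplePersymSeqs (hs : 0 < s) (ht : 0 < t) (hu : 0 < u) (hk : 0 < k)
    (M : Matrix (Fin (s + t + u)) (Fin k) (ZMod 2)) :
    (Fin (s + k - 1) → ZMod 2) × (Fin (t + k - 1) → ZMod 2) × (Fin (u + k - 1) → ZMod 2) :=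
  (fun n => M ⟨min (n : ℕ) (s - 1), by omega⟩ ⟨n - min (n : ℕ) (s - 1), by omega⟩,
   fun n => M ⟨s + min (n : ℕ) (t - 1), by omega⟩ ⟨n - min (n : ℕ) (t - 1), by omega⟩,
   fun n => M ⟨s + t + min (n : ℕ) (u - 1), by omega⟩ ⟨n - min (n : ℕ) (u - 1), by omega⟩)

theorem triplePersymSeqs_triplePersymMatrix (hs : 0 < s) (ht : 0 < t) (hu : 0 < u) (hk : 0 < k)
    (α : Fin (s + k - 1) → ZMod 2) (β : Fin (t + k - 1) → ZMod 2) (γ : Fin (u + k - 1) → ZMod 2) :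
    triplePersymSeqs hs ht hu hk (triplePersymMatrix α β γ) = (α, β, γ) := by
  refine Prod.ext (funext fun n => ?_) (Prod.ext (funext fun n => ?_) (funext fun n => ?_)) <;>
  simp only [triplePersymSeqs, triplePersymMatrix, of_apply] <;> split_ifs <;>
    first | omega | exact congrArg _ (Fin.ext (by simp only; omega))

theorem triplePersymMatrix_triplePersymSeqs (hs : 0 < s) (ht : 0 < t) (hu : 0 < u) (hk : 0 < k)
    {M : Matrix (Fin (s + t + u)) (Fin k) (ZMod 2)} (hM : IsTriplePersymmetric s t u k M) :
    triplePersymMatrix (triplePersymSeqs hs ht hu hk M).1 (triplePersymSeqs hs ht hu hk M).2.1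
      (triplePersymSeqs hs ht hu hk M).2.2 = M := by
  obtain ⟨h₁, h₂, h₃⟩ := hM
  ext a b
  simp only [triplePersymSeqs, triplePersymMatrix, of_apply]
  split_ifs
  · apply h₁ <;> (try simp only) <;> omega
  · apply h₂ <;> (try simp only) <;> omega
  · apply h₃ <;> (try simp only) <;> omega

def triplePersymEquiv (hs : 0 < s) (ht : 0 < t) (hu : 0 < u) (hk : 0 < k) :
    {M // IsTriplePersymmetric s t u k M} ≃
      (Fin (s + k - 1) → ZMod 2) × (Fin (t + k - 1) → ZMod 2) × (Fin (u + k - 1) → ZMod 2) where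
  toFun M := triplePersymSeqs hs ht hu hk M
  invFun x := ⟨triplePersymMatrix x.1 x.2.1 x.2.2, isTriplePersymmetric_triplePersymMatrix _ _ _⟩
  left_inv M := Subtype.ext (triplePersymMatrix_triplePersymSeqs hs ht hu hk M.2)
  right_inv _ := triplePersymSeqs_triplePersymMatrix hs ht hu hk _ _ _

theorem triplePersymRankCount_eq_card (hs : 0 < s) (ht : 0 < t) (hu : 0 < u) (hk : 0 < k)
    (i : ℕ) :
    triplePersymRankCount s t u k i =
      Nat.card {x : (Fin (s + k - 1) → ZMod 2) × (Fin (t + k - 1) → ZMod 2) ×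
        (Fin (u + k - 1) → ZMod 2) // (triplePersymMatrix x.1 x.2.1 x.2.2).rank = i} :=
  Nat.card_congr <| (Equiv.subtypeSubtypeEquivSubtypeInter _ _).symm.trans <|
    (triplePersymEquiv hs ht hu hk).subtypeEquiv fun M => by
      rw [← triplePersymMatrix_triplePersymSeqs hs ht hu hk M.2]; rfl

end TriplePersymmetric

set_option maxRecDepth 4000 in
theorem triplePersym_two_two_two_two :
    triplePersymRankCount 2 2 2 2 0 = 1 ∧
    triplePersymRankCount 2 2 2 2 1 = 21 ∧
    triplePersymRankCount 2 2 2 2 2 = 490 := by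
  have count (i : ℕ) : triplePersymRankCount 2 2 2 2 i =
      Nat.card {x : (Fin 3 → ZMod 2) × (Fin 3 → ZMod 2) × (Fin 3 → ZMod 2) //
        (Finset.univ.image
          (triplePersymMatrix (s := 2) (t := 2) (u := 2) (k := 2) x.1 x.2.1 x.2.2 *ᵥ ·)).card =
            2 ^ i} := by
    simp_rw [triplePersymRankCount_eq_card Nat.two_pos Nat.two_pos Nat.two_pos Nat.two_pos,
      rank_eq_iff_card_image_mulVec, ZMod.card]
  simp only [count, Nat.card_eq_fintype_card]
  exact ⟨by decide, by decide, by decide⟩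
end
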